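/- arXiv:math/0105011 — 3 statements merged into one kernel-verified Lean document; each statement's English description precedes it below -/
import Mathlib

section
/- Let U* ∈ ℂ with U*³ = −1/2, and define w(θ) = −2/(θ − i·U*)² for real θ (with θ − iU* ≠ 0). Then w satisfies the autonomous equation i·w′ + U*·(2|w|² + w²) + U*²·(conj(w) − w) + |w|²·w = 0 for all θ, where conj denotes complex conjugation and |w|² = w·conj(w). -/
open Complex

/-- The separatrix `w(θ) = −2/(θ − iU*)²` (with `U*` real, `U*³ = −1/2`) solves
the autonomous second-internal-layer equation
`i·w′ + U*(2|w|² + w²) + U*²(conj w − w) + |w|²w = 0`. -/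
theorem separatrix_solves_autonomous_equation
    (Ustar : ℂ) (hre : Ustar.im = 0) (hcube : Ustar^3 = -(1/2))
    (w : ℝ → ℂ) (hw : w = fun θ : ℝ => -2 / ((θ : ℂ) - I * Ustar)^2) :
    ∀ θ : ℝ, (θ : ℂ) - I * Ustar ≠ 0 →
      I * deriv w θ
        + Ustar * (2 * (w θ * (starRingEnd ℂ) (w θ)) + (w θ)^2)
        + Ustar^2 * ((starRingEnd ℂ) (w θ) - w θ)
        + (w θ * (starRingEnd ℂ) (w θ)) * w θ = 0 := by
  intro θ hz
  have hreU : (starRingEnd ℂ) Ustar = Ustar := Complex.conj_eq_iff_im.mpr hre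
  set z : ℂ := (θ : ℂ) - I * Ustar with hzdef
  have hd : deriv w θ = 4 / z ^ 3 := by
    have h1 : HasDerivAt (fun x : ℂ => (x - I * Ustar) ^ 2) (2 * z) (θ : ℂ) := by
      simpa using ((hasDerivAt_id (θ : ℂ)).sub_const (I * Ustar)).fun_pow 2
    have h2 : HasDerivAt (fun x : ℂ => -2 / (x - I * Ustar) ^ 2)
        (4 / z ^ 3) (θ : ℂ) := by
      have := ((h1.inv (pow_ne_zero 2 hz)).const_mul (-2 : ℂ))
      have heq : (fun x : ℂ => -2 / (x - I * Ustar) ^ 2)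
          = fun x : ℂ => -2 * ((x - I * Ustar) ^ 2)⁻¹ := by
        funext x; simp [div_eq_mul_inv]
      rw [heq]
      convert this using 1
      · rfl
      · rfl
      · rfl
      rw [hzdef]
      field_simp
      ring
    have h3 : HasDerivAt w (4 / z ^ 3) θ := by
      rw [hw]; exact h2.comp_ofReal
    exact h3.deriv
  have hconjz : (starRingEnd ℂ) z = (θ : ℂ) + I * Ustar := by
    simp [hzdef, Complex.conj_ofReal, Complex.conj_I, hreU]
  have hzb : (θ : ℂ) + I * Ustar ≠ 0 := by
    rw [← hconjz]
    exact star_ne_zero.mpr hz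
  have hwθ : w θ = -2 / z ^ 2 := by rw [hw]
  have hcw : (starRingEnd ℂ) (w θ) = -2 / ((θ : ℂ) + I * Ustar) ^ 2 := by
    rw [hwθ, map_div₀, map_pow, hconjz, map_neg, map_ofNat]
  set b : ℂ := (θ : ℂ) + I * Ustar with hbdef
  rw [hd, hcw, hwθ]
  have hbz : b = z + 2 * (I * Ustar) := by rw [hbdef, hzdef]; ring
  clear_value z b
  have h1 : z * z⁻¹ = 1 := mul_inv_cancel₀ hz
  have h2 : b * b⁻¹ = 1 := mul_inv_cancel₀ hzb
  linear_combination
    ((2:ℂ)*b^2*b⁻¹^4*Ustar^2 + (-2:ℂ)*z⁻¹^2*b^2*b⁻¹^2*Ustar^2 + (-8:ℂ)*z⁻¹^2*b^2*b⁻¹^4*Ustar + (-4:ℂ)*z⁻¹^3*b^2*b⁻¹^2*I + (2:ℂ)*z*z⁻¹*b^2*b⁻¹^4*Ustar^2 + (-2:ℂ)*z*z⁻¹^3*b^2*b⁻¹^2*Ustar^2 + (-8:ℂ)*z*z⁻¹^3*b^2*b⁻¹^4*Ustar + (2:ℂ)*z^2*z⁻¹^2*b^2*b⁻¹^4*Ustar^2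 + (2:ℂ)*z^3*z⁻¹^3*b^2*b⁻¹^4*Ustar^2) * h1
    + ((2:ℂ)*b⁻¹^2*Ustar^2 + (2:ℂ)*b*b⁻¹^3*Ustar^2 + (-2:ℂ)*z⁻¹^2*Ustar^2 + (-8:ℂ)*z⁻¹^2*b⁻¹^2*Ustar + (-2:ℂ)*z⁻¹^2*b*b⁻¹*Ustar^2 + (-8:ℂ)*z⁻¹^2*b*b⁻¹^3*Ustar + (-4:ℂ)*z⁻¹^3*I + (-4:ℂ)*z⁻¹^3*b*b⁻¹*I + (-4:ℂ)*z⁻¹^4*Ustar + (-4:ℂ)*z⁻¹^4*b*b⁻¹*Ustar + (8:ℂ)*z^2*z⁻¹^4*b⁻¹^2*Ustar + (8:ℂ)*z^2*z⁻¹^4*b*b⁻¹^3*Ustar + (-2:ℂ)*z^4*z⁻¹^4*b⁻¹^2*Ustar^2 + (-2:ℂ)*z^4*z⁻¹^4*b*b⁻¹^3*Ustar^2) * h2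
    + ((8:ℂ)*z⁻¹^4*b⁻¹^2*Ustar^2*I + (4:ℂ)*z⁻¹^4*b*b⁻¹^2*Ustar + (4:ℂ)*z*z⁻¹^4*b⁻¹^2*Ustar + (8:ℂ)*z*z⁻¹^4*b⁻¹^2*Ustar*I^2 + (4:ℂ)*z*z⁻¹^4*b*b⁻¹^2*I + (4:ℂ)*z^2*z⁻¹^4*b⁻¹^2*I + (4:ℂ)*z^2*z⁻¹^4*b⁻¹^2*Ustar^3*I + (2:ℂ)*z^2*z⁻¹^4*b*b⁻¹^2*Ustar^2 + (2:ℂ)*z^3*z⁻¹^4*b⁻¹^2*Ustar^2) * hbz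
    + ((16:ℂ)*z⁻¹^4*b⁻¹^2*Ustar^3 + (16:ℂ)*z*z⁻¹^4*b⁻¹^2*Ustar^2*I + (16:ℂ)*z^2*z⁻¹^4*b⁻¹^2*Ustar + (8:ℂ)*z^2*z⁻¹^4*b⁻¹^2*Ustar^4) * Complex.I_sq
    + ((-16:ℂ)*z⁻¹^4*b⁻¹^2 + (-8:ℂ)*z^2*z⁻¹^4*b⁻¹^2*Ustar + (8:ℂ)*z^3*z⁻¹^4*b⁻¹^2*I) * hcube
end

section
/- Let U* be real and define H(w) = U*·(|w|²·conj(w) + |w|²·w) + U*²·((1/2)·conj(w)² + (1/2)·w² − |w|²) + (1/2)·|w|⁴. If w : ℝ → ℂ is differentiable and satisfies i·w′ + U*·(2|w|² + w²) + U*²·(conj(w) − w) + |w|²·w = 0, then H(w(θ)) is constant in θ. Moreover, for the separatrix solution w(θ) = −2/(θ − iU*)² (with U*³ = −1/2), this constant equals 0. -/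
open Complex

/-- The Hamiltonian
`H(w) = U*(|w|²conj w + |w|²w) + U*²((1/2)conj w² + (1/2)w² − |w|²) + (1/2)|w|⁴`
is conserved along any solution of
`i·w′ + U*(2|w|² + w²) + U*²(conj w − w) + |w|²w = 0`, and vanishes on the
separatrix solution `w(θ) = −2/(θ − iU*)²` when `U*³ = −1/2`. -/
theorem hamiltonian_conserved_and_zero_on_separatrix (Ustar : ℝ)
    (H : ℂ → ℂ)
    (hH : H = fun z : ℂ =>
      (Ustar : ℂ) * ((z * (starRingEnd ℂ) z) * (starRingEnd ℂ) z
          + (z * (starRingEnd ℂ) z) * z)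
        + (Ustar : ℂ)^2 * ((1/2) * ((starRingEnd ℂ) z)^2 + (1/2) * z^2
          - z * (starRingEnd ℂ) z)
        + (1/2) * (z * (starRingEnd ℂ) z)^2) :
    (∀ (w w' : ℝ → ℂ),
      (∀ θ : ℝ, HasDerivAt w (w' θ) θ) →
      (∀ θ : ℝ, I * w' θ
          + (Ustar : ℂ) * (2 * (w θ * (starRingEnd ℂ) (w θ)) + (w θ)^2)
          + (Ustar : ℂ)^2 * ((starRingEnd ℂ) (w θ) - w θ)
          + (w θ * (starRingEnd ℂ) (w θ)) * w θ = 0) →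
      ∀ θ₁ θ₂ : ℝ, H (w θ₁) = H (w θ₂)) ∧
    ((Ustar : ℂ)^3 = -(1/2) →
      ∀ θ : ℝ, H (-2 / ((θ : ℂ) - I * Ustar)^2) = 0) := by
  subst hH
  constructor
  · intro w w' hw hode θ₁ θ₂
    have hc : ∀ θ : ℝ, HasDerivAt (fun t => (starRingEnd ℂ) (w t))
        ((starRingEnd ℂ) (w' θ)) θ := fun θ => by
      simpa only [starRingEnd_apply] using (hw θ).star
    have key : ∀ θ : ℝ, HasDerivAt (fun t =>
        (Ustar : ℂ) * ((w t * (starRingEnd ℂ) (w t)) * (starRingEnd ℂ) (w t)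
          + (w t * (starRingEnd ℂ) (w t)) * w t)
        + (Ustar : ℂ)^2 * ((1/2) * ((starRingEnd ℂ) (w t))^2 + (1/2) * (w t)^2
          - w t * (starRingEnd ℂ) (w t))
        + (1/2) * (w t * (starRingEnd ℂ) (w t))^2) 0 θ := by
      intro θ
      have hu' : w' θ = I * ((Ustar : ℂ) * (2 * (w θ * (starRingEnd ℂ) (w θ)) + (w θ)^2)
          + (Ustar : ℂ)^2 * ((starRingEnd ℂ) (w θ) - w θ)
          + (w θ * (starRingEnd ℂ) (w θ)) * w θ) := by
        linear_combination (-I) * hode θ + (w' θ) * Complex.I_sq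
      have hv' : (starRingEnd ℂ) (w' θ) =
          -I * ((Ustar : ℂ) * (2 * ((starRingEnd ℂ) (w θ) * w θ) + ((starRingEnd ℂ) (w θ))^2)
          + (Ustar : ℂ)^2 * (w θ - (starRingEnd ℂ) (w θ))
          + ((starRingEnd ℂ) (w θ) * w θ) * (starRingEnd ℂ) (w θ)) := by
        rw [hu']
        simp only [map_mul, map_add, map_sub, map_pow, map_ofNat, Complex.conj_conj,
          Complex.conj_I, Complex.conj_ofReal]
      have hfun : (fun t =>
          (Ustar : ℂ) * ((w t * (starRingEnd ℂ) (w t)) * (starRingEnd ℂ) (w t)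
            + (w t * (starRingEnd ℂ) (w t)) * w t)
          + (Ustar : ℂ)^2 * ((1/2) * ((starRingEnd ℂ) (w t))^2 + (1/2) * (w t)^2
            - w t * (starRingEnd ℂ) (w t))
          + (1/2) * (w t * (starRingEnd ℂ) (w t))^2) = (fun t =>
          (Ustar : ℂ) * ((w t * (starRingEnd ℂ) (w t)) * (starRingEnd ℂ) (w t)
            + (w t * (starRingEnd ℂ) (w t)) * w t)
          + (Ustar : ℂ)^2 * ((1/2) * ((starRingEnd ℂ) (w t) * (starRingEnd ℂ) (w t))
            + (1/2) * (w t * w t)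
            - w t * (starRingEnd ℂ) (w t))
          + (1/2) * ((w t * (starRingEnd ℂ) (w t)) * (w t * (starRingEnd ℂ) (w t)))) := by
        funext t; ring
      rw [hfun]
      have p := (hw θ).mul (hc θ)
      have t1 := ((p.mul (hc θ)).add (p.mul (hw θ))).const_mul ((Ustar : ℂ))
      have t2a := ((hc θ).mul (hc θ)).const_mul ((1:ℂ)/2)
      have t2b := ((hw θ).mul (hw θ)).const_mul ((1:ℂ)/2)
      have t2 := ((t2a.add t2b).sub p).const_mul ((Ustar : ℂ)^2)
      have t3 := (p.mul p).const_mul ((1:ℂ)/2)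
      have total := (t1.add t2).add t3
      refine total.congr_deriv ?_
      rw [hv', hu']
      simp only [Pi.mul_apply]
      ring
    exact is_const_of_deriv_eq_zero (fun t => (key t).differentiableAt)
      (fun t => (key t).deriv) θ₁ θ₂
  · intro hU θ
    have hU0 : (Ustar : ℂ) ≠ 0 := by
      intro h
      rw [h] at hU
      norm_num at hU
    have hUr : Ustar ≠ 0 := fun h => hU0 (by exact_mod_cast congrArg (fun x : ℝ => (x : ℂ)) h)
    have hconj : (starRingEnd ℂ) (-2 / ((θ : ℂ) - I * Ustar)^2)
        = -2 / ((θ : ℂ) + I * Ustar)^2 := by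
      rw [map_div₀, map_neg, map_ofNat, map_pow, map_sub, map_mul, Complex.conj_I,
        Complex.conj_ofReal, Complex.conj_ofReal]
      ring_nf
    simp only [hconj]
    obtain ⟨a, ha⟩ : ∃ x : ℂ, x = (θ : ℂ) - I * Ustar := ⟨_, rfl⟩
    obtain ⟨b, hb⟩ : ∃ x : ℂ, x = (θ : ℂ) + I * Ustar := ⟨_, rfl⟩
    have hA : a ≠ 0 := by
      intro h
      rw [h] at ha
      have := congrArg Complex.im ha.symm
      simp at this
      exact hUr this
    have hB : b ≠ 0 := by
      intro h
      rw [h] at hb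
      have := congrArg Complex.im hb.symm
      simp at this
      exact hUr this
    have hid : (Ustar : ℂ)^2 * (a^2 - b^2)^2
        - 4 * (Ustar : ℂ) * (a^2 + b^2) + 4 = 0 := by
      rw [ha, hb]
      linear_combination ((-16 : ℂ) * (Ustar : ℂ) * (θ : ℂ)^2 + 8) * hU
        + (16 * (Ustar : ℂ)^4 * (θ : ℂ)^2 - 8 * (Ustar : ℂ)^3) * Complex.I_sq
    rw [← ha, ← hb]
    field_simp [hA, hB]
    have hD : (a ^ 2 * b ^ 2 * b ^ 2 * (a ^ 2 * b ^ 2 * a ^ 2) *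
        (2 * (b ^ 2) ^ 2 * (2 * (a ^ 2) ^ 2) * (a ^ 2 * b ^ 2))) ≠ 0 := by
      simp [hA, hB]
    linear_combination 2 * hid
end

section
/- Let t ∈ ℝ, S′ ∈ ℝ \ {0}, and let U : ℝ → ℂ be a differentiable function satisfying i·S′·U′(t₁) + |U(t₁)|²·U(t₁) − t·U(t₁) = 1 for all t₁. Then the quantity E(t₁) = (1/2)|U(t₁)|⁴ − t·|U(t₁)|² − (U(t₁) + conj(U(t₁))) is constant in t₁. -/
open Complex

/-! The derivative of the energy along `U` is `G U' + conj (G U')` with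
`G = (|U|² - t)·conj U - 1`. The equation says `conj G = -i S' U'`, so `G U' = i S' |U'|²` is
purely imaginary because `S'` is real, and the derivative vanishes. -/

noncomputable def fastOscillatingEnergy (t : ℝ) (z : ℂ) : ℂ :=
  (1/2) * (z * starRingEnd ℂ z)^2 - (t : ℂ) * (z * starRingEnd ℂ z) - (z + starRingEnd ℂ z)

noncomputable def fastOscillatingEnergyGrad (t : ℝ) (z : ℂ) : ℂ :=
  (z * starRingEnd ℂ z - t) * starRingEnd ℂ z - 1

theorem HasDerivAt.fastOscillatingEnergy_comp {U : ℝ → ℂ} {u : ℂ} {s : ℝ} (t : ℝ)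
    (hU : HasDerivAt U u s) :
    HasDerivAt (fun x => fastOscillatingEnergy t (U x))
      (fastOscillatingEnergyGrad t (U s) * u
        + starRingEnd ℂ (fastOscillatingEnergyGrad t (U s) * u)) s := by
  have hconj : HasDerivAt (fun x => starRingEnd ℂ (U x)) (starRingEnd ℂ u) s := hU.star
  have hmod : HasDerivAt (fun x => U x * starRingEnd ℂ (U x))
      (u * starRingEnd ℂ (U s) + U s * starRingEnd ℂ u) s := hU.mul hconj
  refine ((((hmod.pow 2).const_mul (1/2 : ℂ)).sub (hmod.const_mul (t : ℂ))).sub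
    (hU.add hconj)).congr_deriv ?_
  simp only [fastOscillatingEnergyGrad, map_sub, map_mul, map_one, starRingEnd_self_apply,
    conj_ofReal]
  ring

theorem fastOscillatingEnergyGrad_mul_add_conj_eq_zero {t S' : ℝ} {z u : ℂ}
    (hODE : I * (S' : ℂ) * u + (z * starRingEnd ℂ z) * z - (t : ℂ) * z = 1) :
    fastOscillatingEnergyGrad t z * u + starRingEnd ℂ (fastOscillatingEnergyGrad t z * u) = 0 := by
  have hODE_conj := congrArg (starRingEnd ℂ) hODE
  simp only [map_add, map_sub, map_mul, map_one, conj_I, conj_conj, conj_ofReal] at hODE_conj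
  simp only [fastOscillatingEnergyGrad, map_sub, map_mul, map_one, conj_conj, conj_ofReal]
  linear_combination u * hODE_conj + starRingEnd ℂ u * hODE

theorem fast_oscillating_first_integral_general
    (t S' : ℝ) (U U' : ℝ → ℂ)
    (hU : ∀ t₁ : ℝ, HasDerivAt U (U' t₁) t₁)
    (hODE : ∀ t₁ : ℝ,
      I * (S' : ℂ) * U' t₁ + (U t₁ * (starRingEnd ℂ) (U t₁)) * U t₁
        - (t : ℂ) * U t₁ = 1) :
    ∀ t₁ t₂ : ℝ,
      (1/2) * (U t₁ * (starRingEnd ℂ) (U t₁))^2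
          - (t : ℂ) * (U t₁ * (starRingEnd ℂ) (U t₁))
          - (U t₁ + (starRingEnd ℂ) (U t₁))
        = (1/2) * (U t₂ * (starRingEnd ℂ) (U t₂))^2
          - (t : ℂ) * (U t₂ * (starRingEnd ℂ) (U t₂))
          - (U t₂ + (starRingEnd ℂ) (U t₂)) := by
  have hE : ∀ s, HasDerivAt (fun x => fastOscillatingEnergy t (U x)) 0 s := fun s => by
    simpa only [fastOscillatingEnergyGrad_mul_add_conj_eq_zero (hODE s)] using
      (hU s).fastOscillatingEnergy_comp t
  exact is_const_of_deriv_eq_zero (fun s => (hE s).differentiableAt) (fun s => (hE s).deriv)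

/-- First integral of the leading-order fast-oscillating equation: along any
solution of `i·S′·U′ + |U|²U − tU = 1` (with `t` frozen and `S′` real nonzero),
the energy `E = (1/2)|U|⁴ − t|U|² − (U + conj U)` is constant. -/
theorem fast_oscillating_first_integral
    (t S' : ℝ) (hS' : S' ≠ 0) (U U' : ℝ → ℂ)
    (hU : ∀ t₁ : ℝ, HasDerivAt U (U' t₁) t₁)
    (hODE : ∀ t₁ : ℝ,
      I * (S' : ℂ) * U' t₁ + (U t₁ * (starRingEnd ℂ) (U t₁)) * U t₁
        - (t : ℂ) * U t₁ = 1) :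
    ∀ t₁ t₂ : ℝ,
      (1/2) * (U t₁ * (starRingEnd ℂ) (U t₁))^2
          - (t : ℂ) * (U t₁ * (starRingEnd ℂ) (U t₁))
          - (U t₁ + (starRingEnd ℂ) (U t₁))
        = (1/2) * (U t₂ * (starRingEnd ℂ) (U t₂))^2
          - (t : ℂ) * (U t₂ * (starRingEnd ℂ) (U t₂))
          - (U t₂ + (starRingEnd ℂ) (U t₂)) :=
  fast_oscillating_first_integral_general t S' U U' hU hODE
end
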